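/- arXiv:1802.09774 — 2 statements merged into one kernel-verified Lean document; each statement's English description precedes it below -/
import Mathlib

section
/- Let 0 ≤ p ≤ 1 and let A_rw[p] be the PARS over ℕ whose probabilistic reductions are exactly n+1 → ⟨p:n; 1−p:n+2⟩ for every n ∈ ℕ (when p = 1 or p = 0 the right-hand side is the corresponding Dirac distribution). If p > 1/2 then A_rw[p] is strongly almost surely terminating; indeed adh(n) ≤ n/(2p−1) for every n ∈ ℕ. -/
open scoped NNReal ENNReal

/-- A finite (probability) distribution on `A`: a finitely supported weight
function with total weight `1`. -/
structure FinDist (A : Type*) where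
  w : A →₀ ℝ≥0
  sum_one : w.sum (fun _ p => p) = 1

/-- Multidistributions on `A`: finite multisets of weighted elements `p:a`. -/
abbrev MD (A : Type*) := Multiset (ℝ≥0 × A)

namespace MD

/-- The total weight `|μ|` of a multidistribution. -/
def wt {A : Type*} (μ : MD A) : ℝ≥0 := (μ.map Prod.fst).sum

/-- Scalar multiplication `p·μ`. -/
def smul {A : Type*} (p : ℝ≥0) (μ : MD A) : MD A :=
  μ.map fun qa => (p * qa.1, qa.2)

/-- The expected value `E(f(μ)) = Σ_{p:a ∈ μ} p·f(a)`. -/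
def exp {A : Type*} (f : A → ℝ≥0) (μ : MD A) : ℝ≥0 :=
  (μ.map fun pa => pa.1 * f pa.2).sum

end MD

namespace FinDist

/-- The multidistribution associated with a finite distribution. -/
def toMD {A : Type*} (d : FinDist A) : MD A :=
  d.w.support.val.map fun a => (d.w a, a)

/-- The expected value `E(f(d)) = Σ_a d(a)·f(a)`. -/
def exp {A : Type*} (f : A → ℝ≥0) (d : FinDist A) : ℝ≥0 :=
  d.w.sum fun a p => p * f a

/-- Pushforward of a finite distribution along a map; this is
`overline(h(d))`, the collapse of the elementwise image of `d`. -/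
noncomputable def map {A B : Type*} (h : A → B) (d : FinDist A) : FinDist B :=
  ⟨Finsupp.mapDomain h d.w, by
    rw [Finsupp.sum_mapDomain_index (fun _ => rfl) (fun _ _ _ => rfl)]
    exact d.sum_one⟩

/-- The Dirac distribution. -/
noncomputable def dirac {A : Type*} (a : A) : FinDist A :=
  ⟨Finsupp.single a 1, by simp⟩

end FinDist

/-- A PARS over `A`: a set of probabilistic reductions `a → d`. -/
abbrev PARS (A : Type*) := A → FinDist A → Prop

/-- `a` is terminal (a normal form) if it has no reduction. -/
def PARS.Terminal {A : Type*} (P : PARS A) (a : A) : Prop := ∀ d, ¬ P a d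

/-- The probabilistic reduction relation `⇒_P` on multidistributions. -/
inductive PARS.Step {A : Type*} (P : PARS A) : MD A → MD A → Prop
  | term (a : A) : P.Terminal a → PARS.Step P {(1, a)} 0
  | rule (a : A) (d : FinDist A) : P a d → PARS.Step P {(1, a)} d.toMD
  | conv (n : ℕ) (p : Fin n → ℝ≥0) (μ ρ : Fin n → MD A) :
      (∑ i, p i) ≤ 1 → (∀ i, PARS.Step P (μ i) (ρ i)) →
      PARS.Step P (∑ i, MD.smul (p i) (μ i)) (∑ i, MD.smul (p i) (ρ i))

/-- An (infinite) reduction sequence of `P`. -/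
def PARS.RedSeq {A : Type*} (P : PARS A) (μs : ℕ → MD A) : Prop :=
  ∀ n, P.Step (μs n) (μs (n + 1))

/-- A reduction sequence of `P` starting from `μ`. -/
def PARS.RedSeqFrom {A : Type*} (P : PARS A) (μ : MD A) (μs : ℕ → MD A) : Prop :=
  μs 0 = μ ∧ P.RedSeq μs

/-- The expected derivation length `adl(⃗μ) = Σ_{n ≥ 1} |μ_n|`. -/
noncomputable def adl {A : Type*} (μs : ℕ → MD A) : ℝ≥0∞ :=
  ∑' n : ℕ, (MD.wt (μs (n + 1)) : ℝ≥0∞)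

/-- The expected derivation height `adh_P(a)`. -/
noncomputable def adh {A : Type*} (P : PARS A) (a : A) : ℝ≥0∞ :=
  ⨆ (μs : ℕ → MD A) (_ : P.RedSeqFrom {(1, a)} μs), adl μs

/-- Strong almost sure termination. -/
def PARS.SAST {A : Type*} (P : PARS A) : Prop := ∀ a, adh P a < ⊤

/-- Almost sure termination. -/
def PARS.AST {A : Type*} (P : PARS A) : Prop :=
  ∀ μs : ℕ → MD A, P.RedSeq μs →
    Filter.Tendsto (fun n => MD.wt (μs n)) Filter.atTop (nhds 0)

/-- `f` is a (probabilistic) ranking function for `P` with parameter `ε`. -/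
def PARS.Ranking {A : Type*} (P : PARS A) (ε : ℝ≥0) (f : A → ℝ≥0) : Prop :=
  ∀ a d, P a d → f a ≥ ε + FinDist.exp f d


section Aux

variable {A : Type*}

lemma MD.wt_zero : MD.wt (0 : MD A) = 0 := rfl

lemma MD.wt_add (μ ν : MD A) : MD.wt (μ + ν) = MD.wt μ + MD.wt ν := by
  simp [MD.wt]

lemma MD.exp_zero (f : A → ℝ≥0) : MD.exp f (0 : MD A) = 0 := rfl

lemma MD.exp_add (f : A → ℝ≥0) (μ ν : MD A) :
    MD.exp f (μ + ν) = MD.exp f μ + MD.exp f ν := by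
  simp [MD.exp]

lemma MD.wt_smul (p : ℝ≥0) (μ : MD A) : MD.wt (MD.smul p μ) = p * MD.wt μ := by
  simp [MD.wt, MD.smul, Multiset.map_map, Function.comp]
  rw [← Multiset.sum_map_mul_left]

lemma MD.exp_smul (f : A → ℝ≥0) (p : ℝ≥0) (μ : MD A) :
    MD.exp f (MD.smul p μ) = p * MD.exp f μ := by
  simp only [MD.exp, MD.smul, Multiset.map_map, Function.comp]
  rw [← Multiset.sum_map_mul_left]
  congr 1
  apply Multiset.map_congr rfl
  intro x _
  ring

lemma MD.wt_finsum {ι : Type*} (s : Finset ι) (g : ι → MD A) :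
    MD.wt (∑ i ∈ s, g i) = ∑ i ∈ s, MD.wt (g i) := by
  classical
  induction s using Finset.induction with
  | empty => simp [MD.wt_zero]
  | insert _ _ h ih => simp [Finset.sum_insert h, MD.wt_add, ih]

lemma MD.exp_finsum {ι : Type*} (f : A → ℝ≥0) (s : Finset ι) (g : ι → MD A) :
    MD.exp f (∑ i ∈ s, g i) = ∑ i ∈ s, MD.exp f (g i) := by
  classical
  induction s using Finset.induction with
  | empty => simp [MD.exp_zero]
  | insert _ _ h ih => simp [Finset.sum_insert h, MD.exp_add, ih]

lemma MD.wt_singleton (q : ℝ≥0) (a : A) : MD.wt ({(q, a)} : MD A) = q := by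
  simp [MD.wt]

lemma MD.exp_singleton (f : A → ℝ≥0) (q : ℝ≥0) (a : A) :
    MD.exp f ({(q, a)} : MD A) = q * f a := by
  simp [MD.exp]

lemma FinDist.wt_toMD (d : FinDist A) : MD.wt d.toMD = 1 := by
  rw [← d.sum_one]
  simp only [MD.wt, FinDist.toMD, Multiset.map_map, Function.comp]
  rfl

lemma FinDist.exp_toMD (f : A → ℝ≥0) (d : FinDist A) :
    MD.exp f d.toMD = FinDist.exp f d := by
  simp only [MD.exp, FinDist.toMD, FinDist.exp, Multiset.map_map, Function.comp]
  rfl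

lemma step_key {P : PARS A} {ε : ℝ≥0} {f : A → ℝ≥0} (hf : P.Ranking ε f)
    {μ ρ : MD A} (h : P.Step μ ρ) :
    ε * MD.wt ρ + MD.exp f ρ ≤ MD.exp f μ := by
  induction h with
  | term a ha => simp [MD.wt_zero, MD.exp_zero]
  | rule a d hd =>
      have := hf a d hd
      rw [FinDist.wt_toMD, FinDist.exp_toMD, MD.exp_singleton]
      simpa using this
  | conv n q μ ρ hsum hstep ih =>
      rw [MD.wt_finsum, MD.exp_finsum, MD.exp_finsum]
      simp only [MD.wt_smul, MD.exp_smul]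
      rw [Finset.mul_sum, ← Finset.sum_add_distrib]
      apply Finset.sum_le_sum
      intro i _
      calc ε * (q i * MD.wt (ρ i)) + q i * MD.exp f (ρ i)
          = q i * (ε * MD.wt (ρ i) + MD.exp f (ρ i)) := by ring
        _ ≤ q i * MD.exp f (μ i) := mul_le_mul_right (ih i) _

lemma seq_key {P : PARS A} {ε : ℝ≥0} {f : A → ℝ≥0} (hf : P.Ranking ε f)
    {μs : ℕ → MD A} (hseq : P.RedSeq μs) (N : ℕ) :
    (∑ n ∈ Finset.range N, ε * MD.wt (μs (n + 1))) + MD.exp f (μs N)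
      ≤ MD.exp f (μs 0) := by
  induction N with
  | zero => simp
  | succ N ih =>
      rw [Finset.sum_range_succ]
      calc (∑ n ∈ Finset.range N, ε * MD.wt (μs (n + 1)))
            + ε * MD.wt (μs (N + 1)) + MD.exp f (μs (N + 1))
          = (∑ n ∈ Finset.range N, ε * MD.wt (μs (n + 1)))
            + (ε * MD.wt (μs (N + 1)) + MD.exp f (μs (N + 1))) := by ring
        _ ≤ (∑ n ∈ Finset.range N, ε * MD.wt (μs (n + 1)))
            + MD.exp f (μs N) := by
              exact add_le_add le_rfl (step_key hf (hseq N))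
        _ ≤ MD.exp f (μs 0) := ih

lemma adh_le_of_ranking {P : PARS A} {ε : ℝ≥0} (hε : ε ≠ 0) {f : A → ℝ≥0}
    (hf : P.Ranking ε f) (a : A) :
    adh P a ≤ (f a : ℝ≥0∞) / (ε : ℝ≥0∞) := by
  apply iSup₂_le
  rintro μs ⟨h0, hseq⟩
  rw [ENNReal.le_div_iff_mul_le (Or.inl (by exact_mod_cast hε))
    (Or.inl ENNReal.coe_ne_top)]
  rw [adl, ← ENNReal.tsum_mul_right, ENNReal.tsum_eq_iSup_sum]
  apply iSup_le
  intro s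
  obtain ⟨N, hN⟩ : ∃ N, s ⊆ Finset.range N :=
    ⟨(s.sup id) + 1, fun x hx => Finset.mem_range.mpr
      (Nat.lt_succ_of_le (Finset.le_sup (f := id) hx))⟩
  calc (∑ n ∈ s, (MD.wt (μs (n + 1)) : ℝ≥0∞) * (ε : ℝ≥0∞))
      ≤ (∑ n ∈ Finset.range N, (MD.wt (μs (n + 1)) : ℝ≥0∞) * (ε : ℝ≥0∞)) :=
        Finset.sum_le_sum_of_subset hN
    _ = (∑ n ∈ Finset.range N, (MD.wt (μs (n + 1)) : ℝ≥0∞)) * (ε : ℝ≥0∞) :=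
        (Finset.sum_mul ..).symm
    _ = ((∑ n ∈ Finset.range N, ε * MD.wt (μs (n + 1)) : ℝ≥0) : ℝ≥0∞) := by
        push_cast
        rw [Finset.sum_mul]
        congr 1
        ext n
        ring
    _ ≤ ((MD.exp f (μs 0) : ℝ≥0) : ℝ≥0∞) := by
        exact_mod_cast le_trans (le_add_right le_rfl)
          (by simpa using seq_key hf hseq N)
    _ = (f a : ℝ≥0∞) := by rw [h0, MD.exp_singleton, one_mul]

end Aux

/-- the biased random walk on `ℕ` with bias `p > 1/2` is SAST,
with `adh(n) ≤ n/(2p−1)`. -/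
theorem stmt_7 (p : ℝ≥0) (hp1 : p ≤ 1) (hp : 1 / 2 < p) (P : PARS ℕ)
    (hP : ∀ (a : ℕ) (d : FinDist ℕ), P a d ↔ ∃ m : ℕ, a = m + 1 ∧
      ∀ k : ℕ, d.w k = if k = m then p else if k = m + 2 then 1 - p else 0) :
    P.SAST ∧ ∀ n : ℕ, adh P n ≤ (n : ℝ≥0∞) / ((2 * p - 1 : ℝ≥0) : ℝ≥0∞) := by
  set ε : ℝ≥0 := 2 * p - 1 with hε_def
  have h2p : (1 : ℝ≥0) ≤ 2 * p := by
    rw [div_lt_iff₀ (by norm_num)] at hp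
    calc (1 : ℝ≥0) ≤ p * 2 := le_of_lt (by simpa using hp)
      _ = 2 * p := mul_comm _ _
  have h2p' : (1 : ℝ≥0) < 2 * p := by
    rw [div_lt_iff₀ (by norm_num)] at hp
    calc (1 : ℝ≥0) < p * 2 := by simpa using hp
      _ = 2 * p := mul_comm _ _
  have hε : ε ≠ 0 := by
    simp only [hε_def, ne_eq, tsub_eq_zero_iff_le, not_le]
    exact h2p'
  have hrank : P.Ranking ε (fun n => (n : ℝ≥0)) := by
    intro a d had
    obtain ⟨m, rfl, hw⟩ := (hP a d).mp had
    have hwd : d.w = Finsupp.single m p + Finsupp.single (m + 2) (1 - p) := by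
      ext k
      rw [hw k]
      simp only [Finsupp.add_apply, Finsupp.single_apply]
      split_ifs <;> first | (exfalso; omega) | simp
    have hexp : FinDist.exp (fun n : ℕ => (n : ℝ≥0)) d
        = p * m + (1 - p) * (m + 2) := by
      rw [FinDist.exp, hwd, Finsupp.sum_add_index' (by intro a; simp)
        (by intro a b₁ b₂; ring)]
      rw [Finsupp.sum_single_index (by simp), Finsupp.sum_single_index (by simp)]
      push_cast
      ring
    rw [hexp]
    have key : ε + (p * m + (1 - p) * (m + 2)) = m + 1 := by
      have h1p : ((1 - p : ℝ≥0) : ℝ) = 1 - (p : ℝ) := NNReal.coe_sub hp1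
      have hεc : ((ε : ℝ≥0) : ℝ) = 2 * (p : ℝ) - 1 := by
        rw [hε_def]
        rw [NNReal.coe_sub (by exact_mod_cast h2p)]
        push_cast; ring
      have : ((ε + (p * m + (1 - p) * (m + 2)) : ℝ≥0) : ℝ)
          = ((m : ℝ≥0) + 1 : ℝ≥0) := by
        push_cast [h1p, hεc]
        ring
      exact_mod_cast this
    rw [key]
    push_cast
    exact le_refl _
  have main : ∀ n : ℕ, adh P n ≤ (n : ℝ≥0∞) / ((2 * p - 1 : ℝ≥0) : ℝ≥0∞) := by
    intro n
    have := adh_le_of_ranking hε hrank n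
    rw [ENNReal.coe_natCast] at this
    exact this
  refine ⟨fun n => lt_of_le_of_lt (main n) ?_, main⟩
  apply ENNReal.div_lt_top (by simp)
  exact_mod_cast hε
end

section
/- (Completeness of the interpretation method for PTRSs.) Let R be a PTRS over T(F,V) that is strongly almost surely terminating. Then there exists a collapsible probabilistic monotone F-algebra (𝒜, ⊐) such that l ⊐_𝒜 d for every rule l → d ∈ R; indeed the term algebra 𝒯 on T(F,V) (with f_𝒯(t_1,…,t_k) = f(t_1,…,t_k)) together with the relation ⊐ given by the induced PARS R̂ (t ⊐ d iff t → d ∈ R̂) is such an algebra. -/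
open scoped NNReal ENNReal

/-- First-order terms over signature `F` (with arities `ar`) and variables `V`. -/
inductive Tm (F : Type*) (ar : F → ℕ) (V : Type*) : Type _ where
  | var : V → Tm F ar V
  | app : (f : F) → (Fin (ar f) → Tm F ar V) → Tm F ar V

namespace Tm

/-- Homomorphic extension of a substitution to terms. -/
def subst {F V : Type*} {ar : F → ℕ} (σ : V → Tm F ar V) : Tm F ar V → Tm F ar V
  | .var x => σ x
  | .app f ts => .app f (fun i => subst σ (ts i))

end Tm

/-- A (pre)context: a term with variables `V ⊕ Unit`, where `Sum.inr ()` is the hole `□`. -/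
abbrev Ctx (F : Type*) (ar : F → ℕ) (V : Type*) := Tm F ar (V ⊕ Unit)

/-- Number of occurrences of the hole `□` in a precontext. -/
def Ctx.holes {F V : Type*} {ar : F → ℕ} : Ctx F ar V → ℕ
  | .var (.inl _) => 0
  | .var (.inr _) => 1
  | .app _ ts => ∑ i, Ctx.holes (ts i)

/-- A context has exactly one occurrence of the hole. -/
def Ctx.IsCtx {F V : Type*} {ar : F → ℕ} (C : Ctx F ar V) : Prop := C.holes = 1

/-- `C[t]`: plugging a term into (the holes of) a precontext. -/
def Ctx.plug {F V : Type*} {ar : F → ℕ} (C : Ctx F ar V) (t : Tm F ar V) : Tm F ar V :=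
  match C with
  | .var (.inl x) => .var x
  | .var (.inr _) => t
  | .app f ts => .app f (fun i => Ctx.plug (ts i) t)

/-- An `F`-algebra on carrier `X`. -/
structure Alg (F : Type*) (ar : F → ℕ) (X : Type*) where
  I : (f : F) → (Fin (ar f) → X) → X

/-- The interpretation `⟦t⟧_α` of a term under assignment `α`. -/
def Alg.interp {F V X : Type*} {ar : F → ℕ} (A : Alg F ar X) (α : V → X) :
    Tm F ar V → X
  | .var x => α x
  | .app f ts => A.I f (fun i => A.interp α (ts i))

/-- The term algebra `𝒯` on `T(F,V)`. -/
def termAlg (F : Type*) (ar : F → ℕ) (V : Type*) : Alg F ar (Tm F ar V) :=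
  ⟨fun f ts => Tm.app f ts⟩

/-- `(𝒜, ⊐)` is a probabilistic monotone `F`-algebra: each interpretation is
monotone with respect to `⊐` in each argument position. -/
def Alg.ProbMonotone {F X : Type*} {ar : F → ℕ} (A : Alg F ar X)
    (SQ : X → FinDist X → Prop) : Prop :=
  ∀ (f : F) (i : Fin (ar f)) (g : Fin (ar f) → X) (x : X) (d : FinDist X),
    SQ x d →
      SQ (A.I f (Function.update g i x))
         (d.map fun y => A.I f (Function.update g i y))

/-- Collapsibility of a relation `⊐` between elements and finite distributions. -/
def Collapsible {X : Type*} (SQ : X → FinDist X → Prop) : Prop :=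
  ∃ (G : X → ℝ≥0) (ε : ℝ≥0), 0 < ε ∧
    ∀ x d, SQ x d → G x ≥ ε + FinDist.exp G d

/-- `s ⊐_𝒜 d`: for every assignment `α`, `⟦s⟧_α ⊐ overline(⟦d⟧_α)`. -/
def Alg.Orient {F V X : Type*} {ar : F → ℕ} (A : Alg F ar X)
    (SQ : X → FinDist X → Prop) (s : Tm F ar V) (d : FinDist (Tm F ar V)) : Prop :=
  ∀ α : V → X, SQ (A.interp α s) (d.map (A.interp α))

/-- A probabilistic term rewrite system: a set of rules `l → d`. -/
abbrev PTRS (F : Type*) (ar : F → ℕ) (V : Type*) :=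
  Tm F ar V → FinDist (Tm F ar V) → Prop

/-- The PARS `R̂` induced by a PTRS `R`: closure of the rules under
contexts and substitutions. -/
def PTRS.hat {F V : Type*} {ar : F → ℕ} (R : PTRS F ar V) : PARS (Tm F ar V) :=
  fun s e =>
    ∃ (l : Tm F ar V) (d : FinDist (Tm F ar V)) (C : Ctx F ar V) (σ : V → Tm F ar V),
      R l d ∧ C.IsCtx ∧ s = C.plug (l.subst σ) ∧
      e = d.map (fun t => C.plug (t.subst σ))

/-- A PTRS is SAST if its induced PARS is. -/
def PTRS.SAST {F V : Type*} {ar : F → ℕ} (R : PTRS F ar V) : Prop :=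
  R.hat.SAST

/-! ### Auxiliary lemmas -/

namespace MD
variable {A : Type*}

@[simp] lemma wt_zero_s13 : wt (0 : MD A) = 0 := rfl
@[simp] lemma wt_add_s13 (μ ν : MD A) : wt (μ + ν) = wt μ + wt ν := by
  simp [wt]
@[simp] lemma wt_singleton_s13 (p : ℝ≥0) (a : A) : wt ({(p, a)} : MD A) = p := by
  simp [wt]
@[simp] lemma wt_smul_s13 (p : ℝ≥0) (μ : MD A) : wt (smul p μ) = p * wt μ := by
  simp [wt, smul, Multiset.map_map, Function.comp]
  induction μ using Multiset.induction_on with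
  | empty => simp
  | cons a s ih => simp [ih, mul_add]

lemma wt_sum {ι : Type*} (s : Finset ι) (f : ι → MD A) :
    wt (∑ i ∈ s, f i) = ∑ i ∈ s, wt (f i) := by
  classical
  induction s using Finset.induction_on with
  | empty => simp
  | @insert a s h ih => simp [Finset.sum_insert h, ih]

@[simp] lemma wt_singleton' (pa : ℝ≥0 × A) : wt ({pa} : MD A) = pa.1 := by
  simp [wt]

@[simp] lemma smul_singleton (p q : ℝ≥0) (a : A) :
    smul p ({(q, a)} : MD A) = {(p * q, a)} := by simp [smul]

lemma map_finsum {ι B : Type*} (s : Finset ι) (f : ι → MD A) (g : ℝ≥0 × A → B) :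
    (∑ i ∈ s, f i).map g = ∑ i ∈ s, (f i).map g := by
  classical
  induction s using Finset.induction_on with
  | empty => simp
  | @insert a s h ih => simp [Finset.sum_insert h, ih]

lemma sum_finsum {ι : Type*} {M : Type*} [AddCommMonoid M] (s : Finset ι) (f : ι → Multiset M) :
    (∑ i ∈ s, f i).sum = ∑ i ∈ s, (f i).sum := by
  classical
  induction s using Finset.induction_on with
  | empty => simp
  | @insert a s h ih => simp [Finset.sum_insert h, ih]

/-- Every multidistribution is a finite sum of singletons. -/
lemma exists_rep (μ : MD A) :
    ∃ (n : ℕ) (f : Fin n → ℝ≥0 × A), μ = ∑ i, ({f i} : MD A) := by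
  induction μ using Multiset.induction_on with
  | empty => exact ⟨0, Fin.elim0, by simp⟩
  | cons a s ih =>
    obtain ⟨n, f, hf⟩ := ih
    exact ⟨n + 1, Fin.cons a f, by
      rw [Fin.sum_univ_succ]
      simp [hf, Multiset.singleton_add]⟩

end MD

namespace FinDist
variable {A : Type*}

lemma ext' {d₁ d₂ : FinDist A} (h : d₁.w = d₂.w) : d₁ = d₂ := by
  cases d₁; cases d₂; simp_all

@[simp] lemma wt_toMD_s13 (d : FinDist A) : MD.wt d.toMD = 1 := by
  simpa [MD.wt, toMD, Multiset.map_map, Function.comp, Finsupp.sum] using d.sum_one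

lemma map_map {B C : Type*} (k : A → B) (h : B → C) (d : FinDist A) :
    (d.map k).map h = d.map (h ∘ k) := by
  apply ext'
  simp [map, Finsupp.mapDomain_comp]

lemma map_congr {B : Type*} {h k : A → B} (d : FinDist A) (H : ∀ a, h a = k a) :
    d.map h = d.map k := by
  have : h = k := funext H
  rw [this]

end FinDist
namespace PARS
variable {A : Type*} (P : PARS A)

/-- A singleton `{1:a}` always makes a step, to something of weight at most 1. -/
lemma singleton_step (a : A) : ∃ ρ, P.Step {(1, a)} ρ ∧ MD.wt ρ ≤ 1 := by
  classical
  by_cases h : ∃ d, P a d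
  · obtain ⟨d, hd⟩ := h
    exact ⟨d.toMD, Step.rule a d hd, by simp⟩
  · exact ⟨0, Step.term a (fun d hd => h ⟨d, hd⟩), by simp⟩

/-- Every multidistribution of weight at most 1 makes a step. -/
lemma exists_step (μ : MD A) (h : MD.wt μ ≤ 1) :
    ∃ ρ, P.Step μ ρ ∧ MD.wt ρ ≤ 1 := by
  classical
  obtain ⟨n, f, hf⟩ := MD.exists_rep μ
  choose ρ hρ hwρ using fun i : Fin n => P.singleton_step (f i).2
  have hsum : (∑ i, (f i).1) = MD.wt μ := by
    rw [hf, MD.wt_sum]; simp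
  have hrep : μ = ∑ i, MD.smul (f i).1 ({(1, (f i).2)} : MD A) := by
    rw [hf]
    apply Finset.sum_congr rfl
    intro i _
    rw [MD.smul_singleton, mul_one]
  refine ⟨∑ i, MD.smul (f i).1 (ρ i), ?_, ?_⟩
  · rw [hrep]
    exact Step.conv (P := P) n (fun i => (f i).1) (fun i => {(1, (f i).2)}) ρ
      (by rw [hsum]; exact h) hρ
  · rw [MD.wt_sum]
    calc (∑ i, MD.wt (MD.smul (f i).1 (ρ i))) ≤ ∑ i, (f i).1 := by
          apply Finset.sum_le_sum
          intro i _
          rw [MD.wt_smul_s13]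
          exact mul_le_of_le_one_right (by positivity) (hwρ i)
      _ ≤ 1 := hsum ▸ h

/-- A reduction sequence exists from every multidistribution of weight at most 1. -/
lemma exists_redSeqFrom (μ : MD A) (h : MD.wt μ ≤ 1) :
    ∃ μs, P.RedSeqFrom μ μs := by
  classical
  let next : {ν : MD A // MD.wt ν ≤ 1} → {ν : MD A // MD.wt ν ≤ 1} := fun ν =>
    ⟨(P.exists_step ν.1 ν.2).choose, (P.exists_step ν.1 ν.2).choose_spec.2⟩
  let s : ℕ → {ν : MD A // MD.wt ν ≤ 1} := fun n => next^[n] ⟨μ, h⟩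
  refine ⟨fun n => (s n).1, rfl, fun n => ?_⟩
  have hs : s (n + 1) = next (s n) := Function.iterate_succ_apply' next n _
  show P.Step (s n).1 (s (n + 1)).1
  rw [hs]
  exact (P.exists_step (s n).1 (s n).2).choose_spec.1

end PARS
namespace PARS
variable {A : Type*} (P : PARS A)

/-- Near-optimal reduction sequences exist. -/
lemma exists_seq_close (a : A) (ha : adh P a ≠ ⊤) (ε : ℝ≥0∞) (hε : ε ≠ 0) :
    ∃ μs, P.RedSeqFrom {(1, a)} μs ∧ adh P a ≤ adl μs + ε := by
  by_cases h0 : adh P a = 0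
  · obtain ⟨μs, hμs⟩ := P.exists_redSeqFrom {(1, a)} (by simp)
    exact ⟨μs, hμs, by simp [h0]⟩
  · have hlt : adh P a - ε < adh P a := ENNReal.sub_lt_self ha h0 hε
    rw [show adh P a = ⨆ (μs : ℕ → MD A) (_ : P.RedSeqFrom {(1, a)} μs), adl μs from rfl]
      at hlt
    obtain ⟨μs, hμs⟩ := lt_iSup_iff.mp hlt
    obtain ⟨hfrom, hlt'⟩ := lt_iSup_iff.mp hμs
    exact ⟨μs, hfrom, tsub_le_iff_right.mp hlt'.le⟩

/-- The expected derivation height is a ranking function for a SAST PARS. -/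
theorem ranking_of_sast (hS : P.SAST) :
    P.Ranking 1 (fun a => (adh P a).toNNReal) := by
  classical
  intro a d had
  -- main inequality in `ℝ≥0∞`
  have main : 1 + ∑ x ∈ d.w.support, (d.w x : ℝ≥0∞) * adh P x ≤ adh P a := by
    obtain ⟨n, f, hf⟩ := MD.exists_rep d.toMD
    set p : Fin n → ℝ≥0 := fun i => (f i).1 with hp
    set b : Fin n → A := fun i => (f i).2 with hb
    have hsum : (∑ i, p i) = 1 := by
      have := FinDist.wt_toMD_s13 d
      rw [hf, MD.wt_sum] at this
      simpa using this
    have hSsum : (∑ x ∈ d.w.support, (d.w x : ℝ≥0∞) * adh P x)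
        = ∑ i, (p i : ℝ≥0∞) * adh P (b i) := by
      have h1 : (d.toMD.map (fun pa => (pa.1 : ℝ≥0∞) * adh P pa.2)).sum
          = ∑ x ∈ d.w.support, (d.w x : ℝ≥0∞) * adh P x := by
        rw [FinDist.toMD, Multiset.map_map]
        rfl
      have h2 : (d.toMD.map (fun pa => (pa.1 : ℝ≥0∞) * adh P pa.2)).sum
          = ∑ i, (p i : ℝ≥0∞) * adh P (b i) := by
        rw [hf, MD.map_finsum, MD.sum_finsum]
        simp [hp, hb]
      rw [← h1, h2]
    rw [hSsum]
    apply ENNReal.le_of_forall_pos_le_add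
    intro ε hε _
    obtain ⟨ν, hν⟩ := Classical.axiomOfChoice
      (fun i : Fin n => P.exists_seq_close (b i) (hS (b i)).ne (ε : ℝ≥0∞)
        (by exact_mod_cast hε.ne'))
    let μ : ℕ → MD A := fun k => match k with
      | 0 => {(1, a)}
      | (m + 1) => ∑ i, MD.smul (p i) (ν i m)
    have hμ0 : μ 0 = {(1, a)} := rfl
    have hμs : ∀ m, μ (m + 1) = ∑ i, MD.smul (p i) (ν i m) := fun m => rfl
    have hν0 : ∀ i, ν i 0 = {(1, b i)} := fun i => (hν i).1.1
    have hred : P.RedSeqFrom {(1, a)} μ := by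
      refine ⟨rfl, fun k => ?_⟩
      cases k with
      | zero =>
        have h1 : μ 1 = d.toMD := by
          rw [hμs 0, hf]
          apply Finset.sum_congr rfl
          intro i _
          rw [hν0 i, MD.smul_singleton, mul_one]
        show P.Step {(1, a)} (μ 1)
        rw [h1]
        exact Step.rule a d had
      | succ m =>
        exact Step.conv n p (fun i => ν i m) (fun i => ν i (m + 1)) (le_of_eq hsum)
          (fun i => (hν i).1.2 m)
    have hwt : ∀ k, (MD.wt (μ (k + 1)) : ℝ≥0∞) = ∑ i, (p i : ℝ≥0∞) * MD.wt (ν i k) := by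
      intro k
      rw [hμs k, MD.wt_sum]
      push_cast
      simp [MD.wt_smul_s13]
    have hadl : adl μ = 1 + ∑ i, (p i : ℝ≥0∞) * adl (ν i) := by
      rw [show adl μ = ∑' k : ℕ, (MD.wt (μ (k + 1)) : ℝ≥0∞) from rfl,
        tsum_eq_zero_add' ENNReal.summable]
      congr 1
      · rw [hwt 0]
        simp only [hν0, MD.wt_singleton_s13, ENNReal.coe_one, mul_one]
        rw [← ENNReal.coe_finset_sum, hsum, ENNReal.coe_one]
      · calc (∑' k, (MD.wt (μ (k + 1 + 1)) : ℝ≥0∞))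
            = ∑' k, ∑ i, (p i : ℝ≥0∞) * MD.wt (ν i (k + 1)) := by
              exact tsum_congr fun k => hwt (k + 1)
          _ = ∑ i, ∑' k, (p i : ℝ≥0∞) * MD.wt (ν i (k + 1)) := by
              exact Summable.tsum_finsetSum fun i _ => ENNReal.summable
          _ = ∑ i, (p i : ℝ≥0∞) * adl (ν i) := by
              exact Finset.sum_congr rfl fun i _ => ENNReal.tsum_mul_left
    have hle : adl μ ≤ adh P a := le_iSup₂ (f := fun μs (_ : P.RedSeqFrom {(1, a)} μs) => adl μs) μ hred
    calc 1 + ∑ i, (p i : ℝ≥0∞) * adh P (b i)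
        ≤ 1 + ∑ i, (p i : ℝ≥0∞) * (adl (ν i) + ε) := by
          gcongr with i
          exact (hν i).2
      _ = (1 + ∑ i, (p i : ℝ≥0∞) * adl (ν i)) + (∑ i, (p i : ℝ≥0∞)) * ε := by
          rw [Finset.sum_mul]
          simp [mul_add, Finset.sum_add_distrib]
          ring
      _ = adl μ + ε := by
          rw [hadl, ← ENNReal.coe_finset_sum, hsum]
          simp
      _ ≤ adh P a + ε := by gcongr
  -- convert to `ℝ≥0`
  have hcast : ((1 + FinDist.exp (fun x => (adh P x).toNNReal) d : ℝ≥0) : ℝ≥0∞)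
      = 1 + ∑ x ∈ d.w.support, (d.w x : ℝ≥0∞) * adh P x := by
    rw [FinDist.exp, Finsupp.sum]
    push_cast
    congr 1
    apply Finset.sum_congr rfl
    intro x _
    rw [ENNReal.coe_toNNReal (hS x).ne]
  have : ((1 + FinDist.exp (fun x => (adh P x).toNNReal) d : ℝ≥0) : ℝ≥0∞) ≤ adh P a :=
    hcast ▸ main
  rw [← ENNReal.coe_toNNReal (hS a).ne] at this
  exact_mod_cast this

end PARS
namespace Tm
variable {F V : Type*} {ar : F → ℕ}

/-- Injection of terms into precontexts (no holes). -/
def inj : Tm F ar V → Ctx F ar V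
  | .var x => .var (.inl x)
  | .app f ts => .app f (fun i => inj (ts i))

@[simp] lemma holes_inj (t : Tm F ar V) : Ctx.holes (inj t) = 0 := by
  induction t with
  | var x => rfl
  | app f ts ih => simp [inj, Ctx.holes, ih]

@[simp] lemma plug_inj (t s : Tm F ar V) : Ctx.plug (inj t) s = t := by
  induction t with
  | var x => rfl
  | app f ts ih => simp [inj, Ctx.plug, ih]

lemma interp_termAlg (α : V → Tm F ar V) (t : Tm F ar V) :
    (termAlg F ar V).interp α t = t.subst α := by
  induction t with
  | var x => rfl
  | app f ts ih =>
    show Tm.app f _ = Tm.app f _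
    congr 1
    funext i
    exact ih i

end Tm
/-- completeness of the interpretation method: if a PTRS `R` is
SAST, then the term algebra `𝒯` together with the relation `⊐` given by the
induced PARS `R̂` is a collapsible probabilistic monotone `F`-algebra
orienting every rule of `R`. -/
theorem stmt_13 {F V : Type*} [Countable V] [Infinite V]
    {ar : F → ℕ} (R : PTRS F ar V) (h : R.SAST) :
    (termAlg F ar V).ProbMonotone R.hat ∧
    Collapsible R.hat ∧
    (∀ l d, R l d → (termAlg F ar V).Orient R.hat l d) := by
  classical
  refine ⟨?_, ?_, ?_⟩
  · -- monotonicity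
    rintro f i g x dd ⟨l, d0, C, σ, hR, hC, hx, hd⟩
    refine ⟨l, d0, .app f (Function.update (fun j => Tm.inj (g j)) i C), σ, hR, ?_, ?_, ?_⟩
    · show Ctx.holes _ = 1
      show (∑ j, Ctx.holes (Function.update (fun j => Tm.inj (g j)) i C j)) = 1
      rw [Finset.sum_eq_single i]
      · rw [Function.update_self]; exact hC
      · intro j _ hj
        rw [Function.update_of_ne hj]
        exact Tm.holes_inj _
      · intro hi
        exact absurd (Finset.mem_univ i) hi
    · show Tm.app f (Function.update g i x)
        = Tm.app f (fun j => Ctx.plug (Function.update (fun j => Tm.inj (g j)) i C j) (l.subst σ))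
      congr 1
      funext j
      by_cases hj : j = i
      · subst hj
        rw [Function.update_self, Function.update_self]
        exact hx
      · rw [Function.update_of_ne hj, Function.update_of_ne hj, Tm.plug_inj]
    · rw [hd, FinDist.map_map]
      apply FinDist.map_congr
      intro t
      show Tm.app f (Function.update g i (Ctx.plug C (t.subst σ)))
        = Tm.app f (fun j => Ctx.plug (Function.update (fun j => Tm.inj (g j)) i C j) (t.subst σ))
      congr 1
      funext j
      by_cases hj : j = i
      · subst hj
        rw [Function.update_self, Function.update_self]
      · rw [Function.update_of_ne hj, Function.update_of_ne hj, Tm.plug_inj]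
  · -- collapsibility
    exact ⟨fun t => (adh R.hat t).toNNReal, 1, one_pos, R.hat.ranking_of_sast h⟩
  · -- orientation of the rules
    intro l d hld α
    refine ⟨l, d, .var (.inr ()), α, hld, rfl, ?_, ?_⟩
    · show (termAlg F ar V).interp α l = l.subst α
      exact Tm.interp_termAlg α l
    · show d.map ((termAlg F ar V).interp α) = d.map (fun t => t.subst α)
      exact FinDist.map_congr d (Tm.interp_termAlg α)
end
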